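/- arXiv:2210.01360 — 5 statements merged into one kernel-verified Lean document; each statement's English description precedes it below -/
import Mathlib

section
/- The vector w = (1,1) is the unique ℓ₂ max-margin classifier for the distribution with support {(y+n₁, y+n₂) : y ∈ {-1,1}, n₁, n₂ ∈ [-0.5,0.5]}, i.e., it minimizes ‖w‖₂² subject to y·⟨w,x⟩ ≥ 1 on the support. -/
/-- (1,1) is the unique ℓ₂ max-margin classifier for the distribution with support
    {(y+n₁, y+n₂) : y = ±1, n₁, n₂ ∈ [-1/2, 1/2]}. -/
theorem one_one_is_max_margin :
    (∀ (y n₁ n₂ : ℝ), (y = 1 ∨ y = -1) →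
        n₁ ∈ Set.Icc (-(1:ℝ)/2) (1/2) → n₂ ∈ Set.Icc (-(1:ℝ)/2) (1/2) →
        y * ((1:ℝ) * (y + n₁) + (1:ℝ) * (y + n₂)) ≥ 1) ∧
    (∀ w₁ w₂ : ℝ,
      (∀ (y n₁ n₂ : ℝ), (y = 1 ∨ y = -1) →
        n₁ ∈ Set.Icc (-(1:ℝ)/2) (1/2) → n₂ ∈ Set.Icc (-(1:ℝ)/2) (1/2) →
        y * (w₁ * (y + n₁) + w₂ * (y + n₂)) ≥ 1) →
      w₁ ^ 2 + w₂ ^ 2 ≥ 1 ^ 2 + 1 ^ 2 ∧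
      (w₁ ^ 2 + w₂ ^ 2 = 1 ^ 2 + 1 ^ 2 → w₁ = 1 ∧ w₂ = 1)) := by
  constructor
  · rintro y n₁ n₂ (rfl | rfl) ⟨h1, h2⟩ ⟨h3, h4⟩ <;> nlinarith
  · intro w₁ w₂ h
    have key := h 1 (-(1:ℝ)/2) (-(1:ℝ)/2) (Or.inl rfl)
      ⟨le_refl _, by norm_num⟩ ⟨le_refl _, by norm_num⟩
    norm_num at key
    constructor
    · nlinarith [sq_nonneg (w₁ - w₂)]
    · intro he
      constructor <;> nlinarith [sq_nonneg (w₁ - w₂), sq_nonneg (w₁ + w₂ - 2)]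
end

section
/- The max-margin classifier over the feature-replicated distribution is w̃_MM = (2/(d+1), ..., 2/(d+1)) ∈ ℝ^{d+1}, which minimizes (1/2)‖w̃‖₂² subject to y·⟨w̃,x̃⟩ ≥ 1 over the replicated support. -/
/-!
Evaluating the margin constraint at the worst-case sample `y = 1`, `n₁ = n₂ = -1/2` forces
`∑ i, w i ≥ 2`. Among vectors of `ℝ^{d+1}` with coordinate sum at least `(d + 1) c`, where
`c = 2 / (d + 1)`, the constant vector `c` is the unique one of least norm, since
`∑ (w i - c)² ≤ ∑ w i² - (d + 1) c²` whenever `c ≥ 0`. Conversely the constant vector is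
feasible because `y (y + n) ≥ 1/2` for every label `y = ±1` and noise `|n| ≤ 1/2`.
-/

open Finset

section ConstantMinimizer

variable {ι : Type*} [Fintype ι]

theorem sum_sub_sq_le_of_card_mul_le_sum (w : ι → ℝ) {c : ℝ} (hc : 0 ≤ c)
    (hw : Fintype.card ι * c ≤ ∑ i, w i) :
    ∑ i, (w i - c) ^ 2 ≤ ∑ i, w i ^ 2 - Fintype.card ι * c ^ 2 := by
  have expand : ∑ i, (w i - c) ^ 2 = ∑ i, w i ^ 2 - 2 * c * ∑ i, w i + Fintype.card ι * c ^ 2 := by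
    simp only [sub_sq, sum_add_distrib, sum_sub_distrib, ← mul_sum, mul_comm _ c, sum_const,
      card_univ, nsmul_eq_mul]
    ring
  rw [expand]
  nlinarith [mul_le_mul_of_nonneg_left hw hc]

theorem card_mul_sq_le_sum_sq (w : ι → ℝ) {c : ℝ} (hc : 0 ≤ c)
    (hw : Fintype.card ι * c ≤ ∑ i, w i) :
    Fintype.card ι * c ^ 2 ≤ ∑ i, w i ^ 2 := by
  have := sum_sub_sq_le_of_card_mul_le_sum w hc hw
  have : 0 ≤ ∑ i, (w i - c) ^ 2 := sum_nonneg fun i _ => sq_nonneg _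
  linarith

theorem eq_const_of_sum_sq_eq_card_mul_sq (w : ι → ℝ) {c : ℝ} (hc : 0 ≤ c)
    (hw : Fintype.card ι * c ≤ ∑ i, w i) (h : ∑ i, w i ^ 2 = Fintype.card ι * c ^ 2) (i : ι) :
    w i = c := by
  have hle := sum_sub_sq_le_of_card_mul_le_sum w hc hw
  rw [h, sub_self] at hle
  have hzero := (sum_eq_zero_iff_of_nonneg fun j _ => sq_nonneg (w j - c)).mp
    (le_antisymm hle (sum_nonneg fun j _ => sq_nonneg _)) i (mem_univ i)
  exact sub_eq_zero.mp (pow_eq_zero_iff two_ne_zero |>.mp hzero)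

end ConstantMinimizer

theorem sum_ite_lt_eq (d : ℕ) (a b : ℝ) :
    ∑ i : Fin (d + 1), (if (i : ℕ) < d then a else b) = d * a + b := by
  simp [Fin.sum_univ_castSucc]

theorem half_le_mul_add {y n : ℝ} (hy : y = 1 ∨ y = -1) (hn : n ∈ Set.Icc (-(1:ℝ)/2) (1/2)) :
    1 / 2 ≤ y * (y + n) := by
  obtain ⟨hl, hr⟩ := hn
  rcases hy with rfl | rfl <;> linarith

theorem replicated_max_margin_general (d : ℕ) :
    (∀ (y n₁ n₂ : ℝ), (y = 1 ∨ y = -1) →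
        n₁ ∈ Set.Icc (-(1:ℝ)/2) (1/2) → n₂ ∈ Set.Icc (-(1:ℝ)/2) (1/2) →
        y * (∑ i : Fin (d + 1), (2 / ((d : ℝ) + 1)) *
            (if (i : ℕ) < d then y + n₁ else y + n₂)) ≥ 1) ∧
    (∀ w : Fin (d + 1) → ℝ,
      (∀ (y n₁ n₂ : ℝ), (y = 1 ∨ y = -1) →
        n₁ ∈ Set.Icc (-(1:ℝ)/2) (1/2) → n₂ ∈ Set.Icc (-(1:ℝ)/2) (1/2) →
        y * (∑ i : Fin (d + 1), w i * (if (i : ℕ) < d then y + n₁ else y + n₂)) ≥ 1) →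
      (1 / 2) * (∑ i : Fin (d + 1), (w i) ^ 2) ≥
        (1 / 2) * (∑ i : Fin (d + 1), (2 / ((d : ℝ) + 1)) ^ 2) ∧
      ((1 / 2) * (∑ i : Fin (d + 1), (w i) ^ 2) =
          (1 / 2) * (∑ i : Fin (d + 1), (2 / ((d : ℝ) + 1)) ^ 2) →
        ∀ i, w i = 2 / ((d : ℝ) + 1))) := by
  set c : ℝ := 2 / ((d : ℝ) + 1)
  have hc : 0 ≤ c := by positivity
  have hcard : (Fintype.card (Fin (d + 1)) : ℝ) * c = 2 := by
    simp only [Fintype.card_fin, Nat.cast_add, Nat.cast_one, c]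
    field_simp
  have hconst : ∑ _i : Fin (d + 1), c ^ 2 = Fintype.card (Fin (d + 1)) * c ^ 2 := by simp
  refine ⟨fun y n₁ n₂ hy hn₁ hn₂ => ?_, fun w hw => ?_⟩
  · have h₁ := half_le_mul_add hy hn₁
    have h₂ := half_le_mul_add hy hn₂
    rw [← mul_sum, sum_ite_lt_eq]
    simp only [Fintype.card_fin, Nat.cast_add, Nat.cast_one] at hcard
    calc y * (c * (d * (y + n₁) + (y + n₂)))
        = c * (d * (y * (y + n₁)) + y * (y + n₂)) := by ring
      _ ≥ c * (d * (1 / 2) + 1 / 2) := by gcongr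
      _ = 1 := by linarith
  · have hsum : Fintype.card (Fin (d + 1)) * c ≤ ∑ i, w i := by
      have := hw 1 (-(1/2)) (-(1/2)) (Or.inl rfl) (by norm_num) (by norm_num)
      simp only [ite_self, ← sum_mul] at this
      linarith
    rw [hconst]
    exact ⟨by linarith [card_mul_sq_le_sum_sq w hc hsum],
      fun h => eq_const_of_sum_sq_eq_card_mul_sq w hc hsum (by linarith)⟩

/-- The constant vector 2/(d+1) is the max-margin classifier over the
    feature-replicated distribution: it satisfies the margin constraint and uniquely
    minimizes (1/2)‖w̃‖₂² among all w̃ satisfying the constraint. -/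
theorem replicated_max_margin (d : ℕ) (hd : 1 ≤ d) :
    (∀ (y n₁ n₂ : ℝ), (y = 1 ∨ y = -1) →
        n₁ ∈ Set.Icc (-(1:ℝ)/2) (1/2) → n₂ ∈ Set.Icc (-(1:ℝ)/2) (1/2) →
        y * (∑ i : Fin (d + 1), (2 / ((d : ℝ) + 1)) *
            (if (i : ℕ) < d then y + n₁ else y + n₂)) ≥ 1) ∧
    (∀ w : Fin (d + 1) → ℝ,
      (∀ (y n₁ n₂ : ℝ), (y = 1 ∨ y = -1) →
        n₁ ∈ Set.Icc (-(1:ℝ)/2) (1/2) → n₂ ∈ Set.Icc (-(1:ℝ)/2) (1/2) →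
        y * (∑ i : Fin (d + 1), w i * (if (i : ℕ) < d then y + n₁ else y + n₂)) ≥ 1) →
      (1 / 2) * (∑ i : Fin (d + 1), (w i) ^ 2) ≥
        (1 / 2) * (∑ i : Fin (d + 1), (2 / ((d : ℝ) + 1)) ^ 2) ∧
      ((1 / 2) * (∑ i : Fin (d + 1), (w i) ^ 2) =
          (1 / 2) * (∑ i : Fin (d + 1), (2 / ((d : ℝ) + 1)) ^ 2) →
        ∀ i, w i = 2 / ((d : ℝ) + 1))) :=
  replicated_max_margin_general d
end

section
/- For a, b ∈ ℝ not both zero, the function L(a,b) = 1 − min(a,b)² / ((a+b)² + a²/12 + b²/12), restricted to (a,b) with a, b ≥ 0 and a + b > 0, is minimized exactly when a = b. -/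
/-- L(a,b) = 1 − min(a,b)²/((a+b)² + a²/12 + b²/12), over a, b ≥ 0 with a + b > 0,
    is minimized exactly when a = b (on the ray a = b the value is the constant
    L(1,1)). -/
theorem frr_loss_min (a b : ℝ) (ha : 0 ≤ a) (hb : 0 ≤ b) (hab : 0 < a + b) :
    (1 - (min a b) ^ 2 / ((a + b) ^ 2 + a ^ 2 / 12 + b ^ 2 / 12) ≥
      1 - (min 1 1 : ℝ) ^ 2 / (((1 : ℝ) + 1) ^ 2 + 1 ^ 2 / 12 + 1 ^ 2 / 12)) ∧
    (1 - (min a b) ^ 2 / ((a + b) ^ 2 + a ^ 2 / 12 + b ^ 2 / 12) =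
        1 - (min 1 1 : ℝ) ^ 2 / (((1 : ℝ) + 1) ^ 2 + 1 ^ 2 / 12 + 1 ^ 2 / 12) ↔
      a = b) := by
  have hD : 0 < (a + b) ^ 2 + a ^ 2 / 12 + b ^ 2 / 12 := by
    have := pow_pos hab 2
    nlinarith [sq_nonneg a, sq_nonneg b]
  have hc : (min 1 1 : ℝ) ^ 2 / (((1 : ℝ) + 1) ^ 2 + 1 ^ 2 / 12 + 1 ^ 2 / 12) = 6 / 25 := by
    norm_num
  have hle : (min a b) ^ 2 / ((a + b) ^ 2 + a ^ 2 / 12 + b ^ 2 / 12) ≤ 6 / 25 := by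
    rw [div_le_iff₀ hD]
    rcases le_total a b with h | h
    · rw [min_eq_left h]
      nlinarith [mul_nonneg ha (sub_nonneg.2 h), sq_nonneg (b - a)]
    · rw [min_eq_right h]
      nlinarith [mul_nonneg hb (sub_nonneg.2 h), sq_nonneg (a - b)]
  constructor
  · rw [hc]; linarith
  · rw [hc]
    constructor
    · intro h
      have heq : (min a b) ^ 2 / ((a + b) ^ 2 + a ^ 2 / 12 + b ^ 2 / 12) = 6 / 25 := by
        linarith
      rw [div_eq_iff (ne_of_gt hD)] at heq
      rcases le_total a b with h' | h'
      · rw [min_eq_left h'] at heq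
        have h2 : (b - a) ^ 2 = 0 := by
          nlinarith [mul_nonneg ha (sub_nonneg.2 h')]
        have h3 : b - a = 0 := by
          have := sq_eq_zero_iff.mp h2
          exact this
        linarith
      · rw [min_eq_right h'] at heq
        have h2 : (a - b) ^ 2 = 0 := by
          nlinarith [mul_nonneg hb (sub_nonneg.2 h')]
        have h3 : a - b = 0 := sq_eq_zero_iff.mp h2
        linarith
    · intro h
      subst h
      have ha' : 0 < a := by linarith
      rw [min_self]
      have ha2 : a ^ 2 ≠ 0 := by positivity
      have hden : (a + a) ^ 2 + a ^ 2 / 12 + a ^ 2 / 12 = 25 * a ^ 2 / 6 := by ring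
      rw [hden]
      field_simp
end

section
/- Any minimizer (w̃*, φ*) of the feature reconstruction loss L_FRR(w̃, φ) = E[‖⟨w̃, x̃⟩·φ − x̃‖∞²] over the replicated distribution, subject to y·⟨w̃, x̃⟩ ≥ 0 on the support, satisfies w̃₁* + ... + w̃_d* = w̃*_{d+1}. -/
open MeasureTheory

/-- The law of the label y: uniform on {-1, +1}. -/
noncomputable def labelMeasure : Measure ℝ :=
  (1 / 2 : ENNReal) • Measure.dirac (-1 : ℝ) + (1 / 2 : ENNReal) • Measure.dirac (1 : ℝ)

/-- The law of the noise: uniform on [-1/2, 1/2]. -/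
noncomputable def noiseMeasure : Measure ℝ :=
  volume.restrict (Set.Icc (-(1:ℝ)/2) (1/2))

/-- The joint law of (y, n₁, n₂). -/
noncomputable def jointMeasure : Measure (ℝ × ℝ × ℝ) :=
  labelMeasure.prod (noiseMeasure.prod noiseMeasure)

/-- The replicated feature vector x̃ = (y+n₁, …, y+n₁, y+n₂) ∈ ℝ^{d+1}. -/
def xt (d : ℕ) (p : ℝ × ℝ × ℝ) : Fin (d + 1) → ℝ :=
  fun i => if (i : ℕ) < d then p.1 + p.2.1 else p.1 + p.2.2

/-- The feature reconstruction loss L_FRR(w̃, φ) = E[‖⟨w̃,x̃⟩·φ − x̃‖∞²], where the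
    norm on `Fin (d+1) → ℝ` is the sup norm. -/
noncomputable def LFRR (d : ℕ) (w φ : Fin (d + 1) → ℝ) : ℝ :=
  ∫ p, ‖(∑ i, w i * xt d p i) • φ - xt d p‖ ^ 2 ∂jointMeasure

/-- The margin-sign constraint y·⟨w̃, x̃⟩ ≥ 0 on the support of the replicated
    distribution. -/
def SignConstraint (d : ℕ) (w : Fin (d + 1) → ℝ) : Prop :=
  ∀ (y n₁ n₂ : ℝ), (y = 1 ∨ y = -1) →
    n₁ ∈ Set.Icc (-(1:ℝ)/2) (1/2) → n₂ ∈ Set.Icc (-(1:ℝ)/2) (1/2) →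
    y * (∑ i, w i * xt d (y, n₁, n₂) i) ≥ 0

/-! Only `s = w̃₁ + ⋯ + w̃_d` and `t = w̃_{d+1}` enter `⟨w̃, x̃⟩ = s u + t v`, where
`u = y + n₁` and `v = y + n₂`. Bounding the sup norm below by the coordinates `0` and `d`,
`2 L_FRR(w̃, φ) ≥ E[(φ₀ z - u)²] + E[(φ_d z - v)²]` with `z = s u + t v`, and completing the
squares in `φ₀` and `φ_d` shows that the right-hand side exceeds `1/12` by at least
`(s - t)² / (12 E[z²])`. The feasible pair `w̃ = e₀ + e_d`, `φ ≡ 1/2` reconstructs with error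
`|n₁ - n₂| / 2` and so has loss at most `1/24`; hence a minimizer has `s = t`. -/

instance : SFinite noiseMeasure := by unfold noiseMeasure; infer_instance

lemma noiseMeasure_prod_eq :
    noiseMeasure.prod noiseMeasure =
      volume.restrict (Set.Icc (-(1:ℝ)/2) (1/2) ×ˢ Set.Icc (-(1:ℝ)/2) (1/2)) := by
  rw [noiseMeasure, Measure.prod_restrict, ← Measure.volume_eq_prod]

lemma jointMeasure_eq : jointMeasure =
    (1/2 : ENNReal) • (noiseMeasure.prod noiseMeasure).map (Prod.mk (-1))
      + (1/2 : ENNReal) • (noiseMeasure.prod noiseMeasure).map (Prod.mk 1) := by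
  rw [jointMeasure, labelMeasure, Measure.add_prod, Measure.prod_smul_left,
    Measure.prod_smul_left, Measure.dirac_prod, Measure.dirac_prod]

lemma Continuous.integrable_noiseMeasure_prod {g : ℝ × ℝ → ℝ} (hg : Continuous g) :
    Integrable g (noiseMeasure.prod noiseMeasure) := by
  rw [noiseMeasure_prod_eq]
  exact hg.continuousOn.integrableOn_compact (isCompact_Icc.prod isCompact_Icc)

lemma Continuous.integrable_map_prodMk_noiseMeasure {f : ℝ × ℝ × ℝ → ℝ} (hf : Continuous f)
    (y : ℝ) : Integrable f ((noiseMeasure.prod noiseMeasure).map (Prod.mk y)) := by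
  rw [(measurableEmbedding_prodMk_left y).integrable_map_iff]
  exact (hf.comp (Continuous.prodMk_right y)).integrable_noiseMeasure_prod

lemma Continuous.integrable_jointMeasure {f : ℝ × ℝ × ℝ → ℝ} (hf : Continuous f) :
    Integrable f jointMeasure := by
  rw [jointMeasure_eq]
  exact ((hf.integrable_map_prodMk_noiseMeasure _).smul_measure (by norm_num)).add_measure
    ((hf.integrable_map_prodMk_noiseMeasure _).smul_measure (by norm_num))

lemma integral_jointMeasure {f : ℝ × ℝ × ℝ → ℝ} (hf : Continuous f) :
    ∫ p, f p ∂jointMeasure =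
      ((∫ x, ∫ z, f (-1, x, z) ∂noiseMeasure ∂noiseMeasure)
        + ∫ x, ∫ z, f (1, x, z) ∂noiseMeasure ∂noiseMeasure) / 2 := by
  have hslice (y : ℝ) : Integrable (fun q => f (y, q)) (noiseMeasure.prod noiseMeasure) :=
    (hf.comp (Continuous.prodMk_right y)).integrable_noiseMeasure_prod
  rw [jointMeasure_eq,
    integral_add_measure ((hf.integrable_map_prodMk_noiseMeasure _).smul_measure (by norm_num))
      ((hf.integrable_map_prodMk_noiseMeasure _).smul_measure (by norm_num)),
    integral_smul_measure, integral_smul_measure,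
    integral_map measurable_prodMk_left.aemeasurable hf.aestronglyMeasurable,
    integral_map measurable_prodMk_left.aemeasurable hf.aestronglyMeasurable,
    integral_prod (fun q => f (-1, q)) (hslice _), integral_prod (fun q => f (1, q)) (hslice _)]
  norm_num
  ring

lemma integral_noiseMeasure_quadratic (a b c : ℝ) :
    ∫ x, (a + b * x + c * x ^ 2) ∂noiseMeasure = a + c / 12 := by
  have hcont (f : ℝ → ℝ) (hf : Continuous f) : IntervalIntegrable f volume (-1/2) (1/2) :=
    hf.intervalIntegrable _ _
  rw [noiseMeasure, integral_Icc_eq_integral_Ioc,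
    ← intervalIntegral.integral_of_le (by norm_num),
    intervalIntegral.integral_add (hcont _ (by fun_prop)) (hcont _ (by fun_prop)),
    intervalIntegral.integral_add (hcont _ (by fun_prop)) (hcont _ (by fun_prop)),
    intervalIntegral.integral_const_mul b (fun x => x)]
  simp only [intervalIntegral.integral_const, intervalIntegral.integral_const_mul, integral_id,
    integral_pow]
  norm_num
  ring

/-- `E[(α u + β v)²]` for the two feature values `u = y + n₁`, `v = y + n₂`. -/
noncomputable def featureMoment (α β : ℝ) : ℝ := (α + β) ^ 2 + (α ^ 2 + β ^ 2) / 12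

lemma integral_jointMeasure_sq (α β : ℝ) :
    ∫ p, (α * (p.1 + p.2.1) + β * (p.1 + p.2.2)) ^ 2 ∂jointMeasure = featureMoment α β := by
  have inner (y x : ℝ) : ∫ z, (α * (y + x) + β * (y + z)) ^ 2 ∂noiseMeasure
      = (α * (y + x) + β * y) ^ 2 + β ^ 2 / 12 := by
    calc _ = ∫ z, ((α * (y + x) + β * y) ^ 2 + 2 * (α * (y + x) + β * y) * β * z
          + β ^ 2 * z ^ 2) ∂noiseMeasure := by congr 1 with z; ring
      _ = _ := integral_noiseMeasure_quadratic ..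
  have outer (y : ℝ) : ∫ x, ∫ z, (α * (y + x) + β * (y + z)) ^ 2 ∂noiseMeasure ∂noiseMeasure
      = (α + β) ^ 2 * y ^ 2 + (α ^ 2 + β ^ 2) / 12 := by
    calc _ = ∫ x, ((α + β) ^ 2 * y ^ 2 + β ^ 2 / 12 + 2 * (α + β) * y * α * x
          + α ^ 2 * x ^ 2) ∂noiseMeasure := by congr 1 with x; rw [inner]; ring
      _ = _ := by rw [integral_noiseMeasure_quadratic]; ring
  rw [integral_jointMeasure (by fun_prop)]
  simp only [outer, featureMoment]
  ring

def headSum (d : ℕ) (w : Fin (d + 1) → ℝ) : ℝ :=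
  ∑ i ∈ Finset.univ.filter (fun i : Fin (d + 1) => (i : ℕ) < d), w i

lemma sum_mul_xt (d : ℕ) (w : Fin (d + 1) → ℝ) (p : ℝ × ℝ × ℝ) :
    ∑ i, w i * xt d p i = headSum d w * (p.1 + p.2.1) + w (Fin.last d) * (p.1 + p.2.2) := by
  simp [headSum, xt, Finset.sum_filter, Finset.sum_mul, Fin.sum_univ_castSucc]

@[fun_prop]
lemma continuous_xt (d : ℕ) : Continuous (xt d) :=
  continuous_pi fun i => by unfold xt; split_ifs <;> fun_prop

lemma sq_add_sq_le_two_mul_norm_sq {ι : Type*} [Fintype ι] (f : ι → ℝ) (i j : ι) :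
    f i ^ 2 + f j ^ 2 ≤ 2 * ‖f‖ ^ 2 := by
  have h (k : ι) : f k ^ 2 ≤ ‖f‖ ^ 2 := by
    simpa only [Real.norm_eq_abs, sq_abs] using
      pow_le_pow_left₀ (norm_nonneg _) (norm_le_pi_norm f k) 2
  linarith [h i, h j]

lemma featureMoment_add_le_two_mul_LFRR {d : ℕ} (hd : 1 ≤ d) (w φ : Fin (d + 1) → ℝ) :
    featureMoment (headSum d w * φ 0 - 1) (w (Fin.last d) * φ 0)
      + featureMoment (headSum d w * φ (Fin.last d)) (w (Fin.last d) * φ (Fin.last d) - 1)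
      ≤ 2 * LFRR d w φ := by
  have hint {f : ℝ × ℝ × ℝ → ℝ} (hf : Continuous f) := hf.integrable_jointMeasure
  rw [← integral_jointMeasure_sq, ← integral_jointMeasure_sq,
    ← integral_add (hint (by fun_prop)) (hint (by fun_prop)), LFRR, ← integral_const_mul]
  refine integral_mono (hint (by fun_prop)) (hint (by fun_prop)) fun p => ?_
  have h := sq_add_sq_le_two_mul_norm_sq ((∑ i, w i * xt d p i) • φ - xt d p) 0 (Fin.last d)
  have h0 : ((0 : Fin (d + 1)) : ℕ) < d := hd
  rw [sum_mul_xt] at h ⊢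
  simp only [Pi.sub_apply, Pi.smul_apply, smul_eq_mul, xt, h0, if_true,
    Fin.val_last, lt_irrefl, if_false] at h
  calc _ = _ := by ring
    _ ≤ _ := h

lemma LFRR_half_le_of_headSum_eq_one {d : ℕ} {w : Fin (d + 1) → ℝ} (hs : headSum d w = 1)
    (ht : w (Fin.last d) = 1) : LFRR d w (fun _ => 1 / 2) ≤ 1 / 24 := by
  have hint {f : ℝ × ℝ × ℝ → ℝ} (hf : Continuous f) := hf.integrable_jointMeasure
  calc LFRR d w (fun _ => 1 / 2)
      ≤ ∫ p, (1 / 2 * (p.1 + p.2.1) + -1 / 2 * (p.1 + p.2.2)) ^ 2 ∂jointMeasure := by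
        refine integral_mono (hint (by fun_prop)) (hint (by fun_prop)) fun p => ?_
        rw [← sq_abs (1 / 2 * (p.1 + p.2.1) + -1 / 2 * (p.1 + p.2.2))]
        refine pow_le_pow_left₀ (norm_nonneg _) ((pi_norm_le_iff_of_nonneg (abs_nonneg _)).2
          fun i => ?_) 2
        rw [Real.norm_eq_abs, Pi.sub_apply, Pi.smul_apply, smul_eq_mul, sum_mul_xt, hs, ht, xt]
        split_ifs
        · rw [← abs_neg]; exact le_of_eq (by congr 1; ring)
        · exact le_of_eq (by congr 1; ring)
    _ = 1 / 24 := by rw [integral_jointMeasure_sq]; norm_num [featureMoment]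

lemma signConstraint_of_headSum_eq {d : ℕ} {w : Fin (d + 1) → ℝ}
    (h : headSum d w = w (Fin.last d)) (ht : 0 ≤ w (Fin.last d)) : SignConstraint d w := by
  intro y n₁ n₂ hy h₁ h₂
  rw [sum_mul_xt, h]
  rcases hy with rfl | rfl <;> nlinarith [h₁.1, h₁.2, h₂.1, h₂.2]

lemma exists_headSum_eq_one {d : ℕ} (hd : 1 ≤ d) :
    ∃ w : Fin (d + 1) → ℝ, headSum d w = 1 ∧ w (Fin.last d) = 1 := by
  refine ⟨Pi.single 0 1 + Pi.single (Fin.last d) 1, ?_, ?_⟩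
  · simp only [headSum, Pi.add_apply, Finset.sum_add_distrib, Finset.sum_pi_single',
      Finset.mem_filter, Finset.mem_univ, true_and, Fin.val_zero, Fin.val_last, lt_irrefl,
      if_false, add_zero]
    exact if_pos hd
  · simp only [Pi.add_apply, Pi.single_eq_same, add_eq_right]
    exact Pi.single_eq_of_ne (by rw [Ne, Fin.ext_iff, Fin.val_last, Fin.val_zero]; omega) _

lemma eq_of_featureMoment_add_le {s t a b : ℝ}
    (h : featureMoment (s * a - 1) (t * a) + featureMoment (s * b) (t * b - 1) ≤ 1 / 12) :
    s = t := by
  have hq : 0 ≤ featureMoment s t := by unfold featureMoment; positivity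
  have key : featureMoment s t * (featureMoment (s * a - 1) (t * a)
      + featureMoment (s * b) (t * b - 1) - 1 / 12)
      = (a * featureMoment s t - (13 / 12 * s + t)) ^ 2
        + (b * featureMoment s t - (s + 13 / 12 * t)) ^ 2 + (s - t) ^ 2 / 12 := by
    unfold featureMoment; ring
  have hst : (s - t) ^ 2 ≤ 0 := by
    linarith [mul_nonpos_of_nonneg_of_nonpos hq (sub_nonpos.2 h),
      sq_nonneg (a * featureMoment s t - (13 / 12 * s + t)),
      sq_nonneg (b * featureMoment s t - (s + 13 / 12 * t))]
  exact sub_eq_zero.1 (pow_eq_zero_iff two_ne_zero |>.1 (le_antisymm hst (sq_nonneg _)))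

theorem frr_minimizer_balanced_general (d : ℕ) (hd : 1 ≤ d)
    (w' φ' : Fin (d + 1) → ℝ)
    (hmin : ∀ (w φ : Fin (d + 1) → ℝ), SignConstraint d w →
      LFRR d w' φ' ≤ LFRR d w φ) :
    (∑ i ∈ Finset.univ.filter (fun i : Fin (d + 1) => (i : ℕ) < d), w' i) =
      w' (Fin.last d) := by
  obtain ⟨w₀, hs, ht⟩ := exists_headSum_eq_one hd
  have hfeasible : SignConstraint d w₀ :=
    signConstraint_of_headSum_eq (hs.trans ht.symm) (by rw [ht]; exact zero_le_one)
  have hopt : LFRR d w' φ' ≤ 1 / 24 :=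
    (hmin w₀ _ hfeasible).trans (LFRR_half_le_of_headSum_eq_one hs ht)
  exact eq_of_featureMoment_add_le (s := headSum d w') (a := φ' 0) (b := φ' (Fin.last d))
    (by linarith [featureMoment_add_le_two_mul_LFRR hd w' φ'])

/-- Any minimizer (w̃*, φ*) of L_FRR subject to the sign constraint satisfies
    w̃₁* + ⋯ + w̃_d* = w̃*_{d+1}. -/
theorem frr_minimizer_balanced (d : ℕ) (hd : 1 ≤ d)
    (w' φ' : Fin (d + 1) → ℝ)
    (hcon : SignConstraint d w')
    (hmin : ∀ (w φ : Fin (d + 1) → ℝ), SignConstraint d w →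
      LFRR d w' φ' ≤ LFRR d w φ) :
    (∑ i ∈ Finset.univ.filter (fun i : Fin (d + 1) => (i : ℕ) < d), w' i) =
      w' (Fin.last d) :=
  frr_minimizer_balanced_general d hd w' φ' hmin
end

section
/- For a, b ≥ 0 with a + b > 0, the quantity min(a,b)²/((a+b)² + (a²+b²)/12) is at most (1/(4 + 1/6)) = 6/25, with equality if and only if a = b. -/
/-- For a, b ≥ 0 not both zero, min(a,b)²/((a+b)² + (a²+b²)/12) ≤ 6/25, with equality
    iff a = b. -/
theorem frr_key_inequality (a b : ℝ) (ha : 0 ≤ a) (hb : 0 ≤ b) (hab : 0 < a + b) :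
    (min a b) ^ 2 / ((a + b) ^ 2 + (a ^ 2 + b ^ 2) / 12) ≤ 6 / 25 ∧
    ((min a b) ^ 2 / ((a + b) ^ 2 + (a ^ 2 + b ^ 2) / 12) = 6 / 25 ↔ a = b) := by
  have hd : (0:ℝ) < (a + b) ^ 2 + (a ^ 2 + b ^ 2) / 12 := by positivity
  rcases le_total a b with h | h
  · rw [min_eq_left h]
    constructor
    · rw [div_le_div_iff₀ hd (by norm_num)]
      nlinarith [mul_nonneg (sub_nonneg.2 h) ha, sq_nonneg (b - a)]
    · rw [div_eq_div_iff hd.ne' (by norm_num)]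
      constructor
      · intro he; nlinarith [mul_nonneg (sub_nonneg.2 h) ha, sq_nonneg (b - a)]
      · intro he; subst he; ring
  · rw [min_eq_right h]
    constructor
    · rw [div_le_div_iff₀ hd (by norm_num)]
      nlinarith [mul_nonneg (sub_nonneg.2 h) hb, sq_nonneg (a - b)]
    · rw [div_eq_div_iff hd.ne' (by norm_num)]
      constructor
      · intro he; nlinarith [mul_nonneg (sub_nonneg.2 h) hb, sq_nonneg (a - b)]
      · intro he; subst he; ring
end
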